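/- Let G be a finite simple undirected graph, let v be a vertex of G, and let H_v be the auxiliary graph of v. If X is a vertex cover of H_v with v ∉ X, then in the graph G \ X the connected component containing v is a clique. -/

import Mathlib

variable {V : Type*}

/-- The graph obtained from `G` by deleting the vertex set `S`
(deleted vertices become isolated, which does not affect cluster-ness of the rest). -/
def SimpleGraph.deleteSet (G : SimpleGraph V) (S : Set V) : SimpleGraph V where
  Adj a b := G.Adj a b ∧ a ∉ S ∧ b ∉ S
  symm := by
    refine ⟨fun a b h => ?_⟩
    exact ⟨h.1.symm, h.2.2, h.2.1⟩
  loopless := by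
    refine ⟨fun a h => ?_⟩
    exact G.irrefl h.1

/-- `(u, v, w)` is a `P₃` in `G`: an induced path on the three distinct vertices
`u`, `v`, `w` with edges `uv` and `vw` and non-edge `uw`. -/
def IsP3 (G : SimpleGraph V) (u v w : V) : Prop :=
  G.Adj u v ∧ G.Adj v w ∧ ¬ G.Adj u w ∧ u ≠ w

/-- A cluster graph is a graph containing no `P₃`. -/
def IsClusterGraph (G : SimpleGraph V) : Prop :=
  ∀ u v w : V, ¬ IsP3 G u v w

/-- `S` is a modulator of `G`: deleting `S` from `G` yields a cluster graph. -/
def IsModulator (G : SimpleGraph V) (S : Set V) : Prop :=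
  IsClusterGraph (G.deleteSet S)

/-- A solution is a modulator of minimum cardinality. -/
def IsSolution (G : SimpleGraph V) (S : Set V) : Prop :=
  IsModulator G S ∧ ∀ T : Set V, IsModulator G T → S.ncard ≤ T.ncard

/-- `N1 G v` is the neighbourhood of `v` in `G`. -/
def N1 (G : SimpleGraph V) (v : V) : Set V := G.neighborSet v

/-- `N2 G v = N_G(N_G[v])` is the set of vertices at distance exactly `2` from `v`. -/
def N2 (G : SimpleGraph V) (v : V) : Set V :=
  {w | w ≠ v ∧ ¬ G.Adj v w ∧ ∃ u, G.Adj v u ∧ G.Adj u w}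

/-- Adjacency in the auxiliary graph `H_v`: non-edges of `G` inside `N1`,
and edges of `G` between `N1` and `N2`. -/
def HvAdj (G : SimpleGraph V) (v a b : V) : Prop :=
  (a ∈ N1 G v ∧ b ∈ N1 G v ∧ a ≠ b ∧ ¬ G.Adj a b) ∨
  (a ∈ N1 G v ∧ b ∈ N2 G v ∧ G.Adj a b) ∨
  (b ∈ N1 G v ∧ a ∈ N2 G v ∧ G.Adj a b)

/-- `X` is a vertex cover of the auxiliary graph `H_v`: a subset of
`V(H_v) = N1 ∪ N2` meeting every edge of `H_v`. -/
def IsVCHv (G : SimpleGraph V) (v : V) (X : Set V) : Prop :=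
  X ⊆ N1 G v ∪ N2 G v ∧ ∀ a b : V, HvAdj G v a b → a ∈ X ∨ b ∈ X

/-- `X` is a vertex cover of the graph `H`. -/
def IsVC (H : SimpleGraph V) (X : Set V) : Prop :=
  ∀ a b : V, H.Adj a b → a ∈ X ∨ b ∈ X

/-- The connected component of `v` in `G` is a clique. -/
def ComponentIsClique (G : SimpleGraph V) (v : V) : Prop :=
  ∀ u w : V, G.Reachable v u → G.Reachable v w → u ≠ w → G.Adj u w

/-- The auxiliary graph `H_v` is an `s`-skein with seagulls `(x i, y i, z i)`:
it is the disjoint union of `s` seagulls (paths on three vertices with middle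
vertex `y i ∈ N1` and endpoints `x i, z i ∈ N2`) and isolated vertices. -/
def IsSkein (G : SimpleGraph V) (v : V) (s : ℕ) (x y z : Fin s → V) : Prop :=
  (∀ i, x i ∈ N2 G v ∧ y i ∈ N1 G v ∧ z i ∈ N2 G v) ∧
  (∀ i, x i ≠ z i) ∧
  (∀ i j, i ≠ j → ({x i, y i, z i} ∩ {x j, y j, z j} : Set V) = ∅) ∧
  (∀ i, HvAdj G v (x i) (y i) ∧ HvAdj G v (y i) (z i) ∧ ¬ HvAdj G v (x i) (z i)) ∧
  (∀ a b : V, HvAdj G v a b →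
    ∃ i, (a = x i ∧ b = y i) ∨ (a = y i ∧ b = x i) ∨
         (a = y i ∧ b = z i) ∨ (a = z i ∧ b = y i))

/-!
Since `X` covers the `N1`–`N2` edges of `H_v`, no edge of `G \ X` leaves `N[v] \ X`, so the
component of `v` lies inside `N[v] \ X`; since `X` also covers the non-edges of `G` inside `N1`,
the set `N[v] \ X` is a clique of `G \ X`.
-/

theorem SimpleGraph.Reachable.mem_of_adj_closed {G : SimpleGraph V} {S : Set V}
    (hS : ∀ ⦃a b⦄, a ∈ S → G.Adj a b → b ∈ S) {u w : V} (h : G.Reachable u w) (hu : u ∈ S) :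
    w ∈ S := by
  obtain ⟨p⟩ := h
  induction p with
  | nil => exact hu
  | cons hab _ ih => exact ih (hS hu hab)

section CoverOfHv

variable {G : SimpleGraph V} {v : V} {X : Set V}

theorem deleteSet_adj_of_mem_N1 (hX : ∀ a b, HvAdj G v a b → a ∈ X ∨ b ∈ X) {a b : V}
    (ha : a ∈ N1 G v \ X) (hb : b ∈ N1 G v \ X) (hab : a ≠ b) : (G.deleteSet X).Adj a b := by
  refine ⟨?_, ha.2, hb.2⟩
  by_contra hG
  exact (hX a b (Or.inl ⟨ha.1, hb.1, hab, hG⟩)).elim ha.2 hb.2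

theorem mem_N1_of_deleteSet_adj (hX : ∀ a b, HvAdj G v a b → a ∈ X ∨ b ∈ X) {a b : V}
    (ha : a ∈ N1 G v \ X) (hab : (G.deleteSet X).Adj a b) (hbv : b ≠ v) : b ∈ N1 G v := by
  obtain ⟨hG, haX, hbX⟩ := hab
  by_contra hbN
  have hbN2 : b ∈ N2 G v := ⟨hbv, hbN, a, ha.1, hG⟩
  exact (hX a b (Or.inr (Or.inl ⟨ha.1, hbN2, hG⟩))).elim haX hbX

theorem mem_insert_N1_diff_of_deleteSet_adj (hX : ∀ a b, HvAdj G v a b → a ∈ X ∨ b ∈ X)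
    ⦃a b : V⦄ (ha : a ∈ insert v (N1 G v \ X)) (hab : (G.deleteSet X).Adj a b) :
    b ∈ insert v (N1 G v \ X) := by
  rcases ha with rfl | ha
  · exact Or.inr ⟨hab.1, hab.2.2⟩
  · by_cases hbv : b = v
    · exact Or.inl hbv
    · exact Or.inr ⟨mem_N1_of_deleteSet_adj hX ha hab hbv, hab.2.2⟩

theorem isClique_insert_N1_diff (hX : ∀ a b, HvAdj G v a b → a ∈ X ∨ b ∈ X) (hvX : v ∉ X) :
    (G.deleteSet X).IsClique (insert v (N1 G v \ X)) := by
  refine SimpleGraph.isClique_insert.mpr ⟨fun a ha b hb hab ↦ ?_, fun b hb _ ↦ ?_⟩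
  · exact deleteSet_adj_of_mem_N1 hX ha hb hab
  · exact ⟨hb.1, hvX, hb.2⟩

end CoverOfHv

theorem stmt_3_general (G : SimpleGraph V) (v : V) (X : Set V)
    (hX : IsVCHv G v X) (hvX : v ∉ X) :
    ComponentIsClique (G.deleteSet X) v := by
  have hclosed := mem_insert_N1_diff_of_deleteSet_adj hX.2
  intro u w hu hw huw
  exact isClique_insert_N1_diff hX.2 hvX (hu.mem_of_adj_closed hclosed (.inl rfl))
    (hw.mem_of_adj_closed hclosed (.inl rfl)) huw

/-- If `X` is a vertex cover of `H_v` with `v ∉ X`, then in `G \ X`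
the connected component of `v` is a clique. -/
theorem stmt_3 [Fintype V] (G : SimpleGraph V) (v : V) (X : Set V)
    (hX : IsVCHv G v X) (hvX : v ∉ X) :
    ComponentIsClique (G.deleteSet X) v :=
  stmt_3_general G v X hX hvX
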